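/- Let f : {-1,1}^n → ℝ be (ε/4, d, s)-bounded, i.e., Σ_{S : |S| > d} f̂(S)² ≤ ε/4 and Σ_S |f̂(S)| ≤ s, where 0 < ε. Then there exists a function h : {-1,1}^n → ℝ that is a linear combination of at most 4s²/ε + 1 parity functions, each of degree at most d (together with the constant term), such that E_{x uniform on {-1,1}^n}[(f(x) − h(x))²] ≤ ε/2. -/

import Mathlib

open Finset
open scoped Classical

noncomputable def cube (n : ℕ) : Finset (Fin n → ℝ) :=
  Fintype.piFinset fun _ => ({-1, 1} : Finset ℝ)

def chi {n : ℕ} (S : Finset (Fin n)) (x : Fin n → ℝ) : ℝ := ∏ i ∈ S, x i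

noncomputable def expectation {n : ℕ} (g : (Fin n → ℝ) → ℝ) : ℝ :=
  (2 ^ n : ℝ)⁻¹ * ∑ x ∈ cube n, g x

noncomputable def fhat {n : ℕ} (f : (Fin n → ℝ) → ℝ) (S : Finset (Fin n)) : ℝ :=
  expectation fun x => f x * chi S x

/-! Keep the low-degree coefficients with `|f̂(S)| > t := (ε / 4) / L`, where `L ≤ s` is
their ℓ¹ mass. By Markov's inequality there are at most `L / t ≤ 4s² / ε` of them, and the
discarded low-degree ones have `∑ f̂(S)² ≤ t L = ε / 4`. As the parities are an orthonormal basis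
of the functions on the cube, the error of the truncated Fourier expansion is the Fourier mass
outside `T`: at most this plus the high-degree mass `ε / 4`. -/

section Thresholding

variable {ι : Type*} (U : Finset ι) (c : ι → ℝ)

theorem card_filter_lt_abs_mul_le (t : ℝ) :
    (#{i ∈ U | t < |c i|} : ℝ) * t ≤ ∑ i ∈ U, |c i| :=
  calc (#{i ∈ U | t < |c i|} : ℝ) * t = ∑ i ∈ U with t < |c i|, t := by
        rw [sum_const, nsmul_eq_mul]
    _ ≤ ∑ i ∈ U with t < |c i|, |c i| := sum_le_sum fun i hi => (mem_filter.1 hi).2.le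
    _ ≤ ∑ i ∈ U, |c i| :=
        sum_le_sum_of_subset_of_nonneg (filter_subset _ _) fun i _ _ => abs_nonneg _

theorem sum_sq_filter_abs_le_mul {t : ℝ} (ht : 0 ≤ t) :
    ∑ i ∈ U with |c i| ≤ t, c i ^ 2 ≤ t * ∑ i ∈ U, |c i| :=
  calc ∑ i ∈ U with |c i| ≤ t, c i ^ 2 ≤ ∑ i ∈ U with |c i| ≤ t, t * |c i| :=
        sum_le_sum fun i hi => by
          rw [← sq_abs, sq]
          exact mul_le_mul_of_nonneg_right (mem_filter.1 hi).2 (abs_nonneg _)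
    _ ≤ ∑ i ∈ U, t * |c i| :=
        sum_le_sum_of_subset_of_nonneg (filter_subset _ _) fun i _ _ =>
          mul_nonneg ht (abs_nonneg _)
    _ = t * ∑ i ∈ U, |c i| := (mul_sum ..).symm

theorem exists_subset_card_le_sum_sdiff_sq_le [DecidableEq ι] {δ : ℝ} (hδ : 0 < δ) :
    ∃ T ⊆ U, (#T : ℝ) ≤ (∑ i ∈ U, |c i|) ^ 2 / δ ∧ ∑ i ∈ U \ T, c i ^ 2 ≤ δ := by
  set L := ∑ i ∈ U, |c i|
  obtain hL | hL := (sum_nonneg fun i _ => abs_nonneg (c i) : 0 ≤ L).eq_or_lt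
  · have hc : ∀ i ∈ U, |c i| = 0 :=
      (sum_eq_zero_iff_of_nonneg fun i _ => abs_nonneg _).1 hL.symm
    refine ⟨∅, empty_subset _, by rw [card_empty, Nat.cast_zero]; positivity, ?_⟩
    rw [sdiff_empty, sum_eq_zero fun i hi => by simp [abs_eq_zero.1 (hc i hi)]]
    exact hδ.le
  · set t := δ / L
    refine ⟨{i ∈ U | t < |c i|}, filter_subset _ _, ?_, ?_⟩
    · rw [le_div_iff₀ hδ]
      calc (#{i ∈ U | t < |c i|} : ℝ) * δ = (#{i ∈ U | t < |c i|} : ℝ) * t * L := by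
            rw [mul_assoc, div_mul_cancel₀ δ hL.ne']
        _ ≤ L * L := mul_le_mul_of_nonneg_right (card_filter_lt_abs_mul_le U c t) hL.le
        _ = L ^ 2 := (sq L).symm
    · rw [← filter_not]
      simp_rw [not_lt]
      calc ∑ i ∈ U with |c i| ≤ t, c i ^ 2 ≤ t * L :=
            sum_sq_filter_abs_le_mul U c (by positivity)
        _ = δ := div_mul_cancel₀ δ hL.ne'

end Thresholding

section Fourier

variable {n : ℕ}

theorem mem_cube {x : Fin n → ℝ} : x ∈ cube n ↔ ∀ i, x i = -1 ∨ x i = 1 := by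
  simp [cube, Fintype.mem_piFinset]

theorem sum_cube_prod (g : Fin n → ℝ → ℝ) :
    ∑ x ∈ cube n, ∏ i, g i (x i) = ∏ i, (g i (-1) + g i 1) := by
  rw [cube, ← prod_univ_sum]
  exact prod_congr rfl fun i _ => sum_pair (by norm_num)

theorem chi_eq_prod_ite (S : Finset (Fin n)) (x : Fin n → ℝ) :
    chi S x = ∏ i, if i ∈ S then x i else 1 := by
  rw [chi, prod_ite_mem, univ_inter]

theorem sum_cube_chi_mul_chi (S S' : Finset (Fin n)) :
    ∑ x ∈ cube n, chi S x * chi S' x = if S = S' then 2 ^ n else 0 := by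
  have factor : ∀ i, (if i ∈ S then (-1 : ℝ) else 1) * (if i ∈ S' then -1 else 1)
      + (if i ∈ S then 1 else 1) * (if i ∈ S' then 1 else 1)
      = if (i ∈ S ↔ i ∈ S') then 2 else 0 := by
    intro i
    by_cases h : i ∈ S <;> by_cases h' : i ∈ S' <;> simp [h, h'] <;> norm_num
  simp_rw [chi_eq_prod_ite, ← prod_mul_distrib]
  rw [sum_cube_prod fun i a => (if i ∈ S then a else 1) * (if i ∈ S' then a else 1)]
  simp only [factor, Fintype.prod_ite_zero, prod_const, card_univ, Fintype.card_fin]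
  simp only [← Finset.ext_iff]

theorem sum_chi_mul_chi {x y : Fin n → ℝ} (hx : x ∈ cube n) (hy : y ∈ cube n) :
    ∑ S, chi S x * chi S y = if x = y then 2 ^ n else 0 := by
  have factor : ∀ i, 1 + x i * y i = if x i = y i then 2 else 0 := by
    intro i
    rcases mem_cube.1 hx i with h | h <;> rcases mem_cube.1 hy i with h' | h' <;>
      simp [h, h'] <;> norm_num
  simp_rw [chi, ← prod_mul_distrib]
  rw [← powerset_univ, ← prod_one_add]
  simp only [factor, Fintype.prod_ite_zero, prod_const, card_univ, Fintype.card_fin]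
  simp only [← funext_iff]

theorem expectation_congr {g h : (Fin n → ℝ) → ℝ} (hgh : ∀ x ∈ cube n, g x = h x) :
    expectation g = expectation h := by
  rw [expectation, expectation, sum_congr rfl hgh]

theorem sum_fhat_mul_chi (f : (Fin n → ℝ) → ℝ) {x : Fin n → ℝ} (hx : x ∈ cube n) :
    ∑ S, fhat f S * chi S x = f x := by
  have kernel : ∀ y ∈ cube n,
      f y * ∑ S, chi S y * chi S x = if x = y then 2 ^ n * f x else 0 := by
    intro y hy
    rw [sum_chi_mul_chi hy hx]
    by_cases h : y = x
    · simp [h, mul_comm]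
    · simp [h, Ne.symm h]
  calc ∑ S, fhat f S * chi S x
      = (2 ^ n)⁻¹ * ∑ y ∈ cube n, f y * ∑ S, chi S y * chi S x := by
        simp only [fhat, expectation, mul_sum, sum_mul, mul_assoc]
        rw [sum_comm]
    _ = f x := by
        rw [sum_congr rfl kernel, sum_ite_eq, if_pos hx, inv_mul_cancel_left₀ (by positivity)]

theorem expectation_sum_mul_chi_sq (U : Finset (Finset (Fin n))) (a : Finset (Fin n) → ℝ) :
    expectation (fun x => (∑ S ∈ U, a S * chi S x) ^ 2) = ∑ S ∈ U, a S ^ 2 := by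
  have orth : ∀ S ∈ U, ∑ S' ∈ U, a S * a S' * ∑ x ∈ cube n, chi S x * chi S' x
      = 2 ^ n * a S ^ 2 := by
    intro S hS
    simp only [sum_cube_chi_mul_chi, mul_ite, mul_zero, sum_ite_eq, if_pos hS]
    ring
  calc expectation (fun x => (∑ S ∈ U, a S * chi S x) ^ 2)
      = (2 ^ n)⁻¹ * ∑ S ∈ U, ∑ S' ∈ U, a S * a S' * ∑ x ∈ cube n, chi S x * chi S' x := by
        rw [expectation]
        congr 1
        simp_rw [sq, sum_mul_sum, mul_sum]
        rw [sum_comm]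
        refine sum_congr rfl fun S _ => ?_
        rw [sum_comm]
        exact sum_congr rfl fun S' _ => sum_congr rfl fun x _ => by ring
    _ = ∑ S ∈ U, a S ^ 2 := by
        rw [sum_congr rfl orth, ← mul_sum, inv_mul_cancel_left₀ (by positivity)]

theorem expectation_sub_sum_fhat_mul_chi_sq (f : (Fin n → ℝ) → ℝ)
    (T : Finset (Finset (Fin n))) :
    expectation (fun x => (f x - ∑ S ∈ T, fhat f S * chi S x) ^ 2)
      = ∑ S ∈ univ \ T, fhat f S ^ 2 := by
  rw [← expectation_sum_mul_chi_sq]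
  refine expectation_congr fun x hx => ?_
  rw [sum_sdiff_eq_sub (subset_univ T), sum_fhat_mul_chi f hx]

end Fourier

/-- If f is (ε/4,d,s)-bounded (Fourier mass above degree d at most ε/4 and Fourier
L1 norm at most s), then there is a linear combination h of at most 4s²/ε + 1 parity
functions of degree at most d (including the constant term χ_∅) with E[(f-h)²] ≤ ε/2. -/
theorem sparse_low_degree_approx (n d : ℕ) (f : (Fin n → ℝ) → ℝ) (s ε : ℝ) (hε : 0 < ε)
    (hconc : ∑ S ∈ Finset.univ.filter (fun S : Finset (Fin n) => d < S.card),
        fhat f S ^ 2 ≤ ε / 4)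
    (hL1 : ∑ S : Finset (Fin n), |fhat f S| ≤ s) :
    ∃ (T : Finset (Finset (Fin n))) (coef : Finset (Fin n) → ℝ),
      ((T.card : ℝ) ≤ 4 * s ^ 2 / ε + 1) ∧
      (∀ S ∈ T, S.card ≤ d) ∧
      expectation (fun x => (f x - ∑ S ∈ T, coef S * chi S x) ^ 2) ≤ ε / 2 := by
  set low := univ.filter fun S : Finset (Fin n) => ¬d < S.card
  obtain ⟨T, hT_low, hT_card, hT_tail⟩ :=
    exists_subset_card_le_sum_sdiff_sq_le low (fhat f) (by positivity : 0 < ε / 4)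
  have h_low_L1 : ∑ S ∈ low, |fhat f S| ≤ s :=
    (sum_le_sum_of_subset_of_nonneg (subset_univ _) fun _ _ _ => abs_nonneg _).trans hL1
  refine ⟨T, fhat f, ?_, fun S hS => not_lt.1 (mem_filter.1 (hT_low hS)).2, ?_⟩
  · calc (#T : ℝ) ≤ (∑ S ∈ low, |fhat f S|) ^ 2 / (ε / 4) := hT_card
      _ ≤ s ^ 2 / (ε / 4) := by gcongr
      _ ≤ 4 * s ^ 2 / ε + 1 := by
        rw [div_div_eq_mul_div, mul_comm]
        linarith
  · have h_split := sum_filter_add_sum_filter_not univ (fun S : Finset (Fin n) => d < S.card)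
      fun S => fhat f S ^ 2
    have h_tail := sum_sdiff_eq_sub (f := fun S => fhat f S ^ 2) hT_low
    rw [expectation_sub_sum_fhat_mul_chi_sq, sum_sdiff_eq_sub (subset_univ T)]
    linarith
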